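/- arXiv:2008.01153 — 3 statements merged into one kernel-verified Lean document; each statement's English description precedes it below -/
import Mathlib

section
/- Let G be a connected d-regular finite simple graph with adjacency matrix A, and let λ_2 be the second largest eigenvalue of A. Then the expansion ratio satisfies h(G) ≥ (d - λ_2)/2. -/
/-!
Test the Rayleigh quotient of the adjacency matrix `A` on the zero-sum vector `v` equal to `|Sᶜ|`
on `S` and to `-|S|` off `S`. Every eigenvector of `A` with eigenvalue above `λ₂ < d` is constant
(its sum is nonzero, forcing the eigenvalue to be `d`, and its zero-sum part is then a
`d`-eigenvector that must vanish), so it is orthogonal to `v` and the spectral theorem gives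
`vᵀAv ≤ λ₂ ‖v‖²`. The Laplacian identity `d ‖v‖² - vᵀAv = ½ ∑_{i ~ j} (vᵢ - vⱼ)² = n² e(S, Sᶜ)`
together with `‖v‖² = n |S| |Sᶜ|` yields `(d - λ₂) |S| |Sᶜ| ≤ n e(S, Sᶜ)`, and `|Sᶜ| ≥ n / 2`
finishes the proof.
-/

/-- The number of ordered pairs `(u,v) ∈ S × T` with `{u,v}` an edge of `G`. -/
def eCount {n : ℕ} (G : SimpleGraph (Fin n)) [DecidableRel G.Adj]
    (S T : Finset (Fin n)) : ℕ :=
  ((S ×ˢ T).filter fun p => G.Adj p.1 p.2).card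

/-- `lam` is the second largest eigenvalue of the symmetric matrix `A` of a `d`-regular graph:
it is the largest eigenvalue attained by an eigenvector orthogonal to the all-ones vector. -/
def IsSecondLargestEig {n : ℕ} (A : Matrix (Fin n) (Fin n) ℝ) (lam : ℝ) : Prop :=
  (∃ v : Fin n → ℝ, v ≠ 0 ∧ (∑ i, v i) = 0 ∧ A.mulVec v = lam • v) ∧
    ∀ (μ : ℝ) (v : Fin n → ℝ), v ≠ 0 → (∑ i, v i) = 0 → A.mulVec v = μ • v → μ ≤ lam

open Finset Matrix

theorem Matrix.IsHermitian.dotProduct_mulVec_self_le_of_orthogonal {ι : Type*} [Fintype ι]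
    {A : Matrix ι ι ℝ} (hA : A.IsHermitian) {c : ℝ} {v : ι → ℝ}
    (hv : ∀ (μ : ℝ) (u : ι → ℝ), c < μ → A *ᵥ u = μ • u → u ⬝ᵥ v = 0) :
    v ⬝ᵥ A *ᵥ v ≤ c * (v ⬝ᵥ v) := by
  classical
  set B := hA.eigenvectorBasis
  have hparseval (x y : ι → ℝ) : x ⬝ᵥ y = ∑ i, (B i ⬝ᵥ x) * (B i ⬝ᵥ y) := by
    have := B.sum_inner_mul_inner (WithLp.toLp 2 y) (WithLp.toLp 2 x)
    simp only [EuclideanSpace.inner_eq_star_dotProduct, star_trivial] at this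
    rw [← this]
    exact sum_congr rfl fun i _ => by rw [dotProduct_comm x, mul_comm]
  have heig (i : ι) : B i ⬝ᵥ A *ᵥ v = hA.eigenvalues i * (B i ⬝ᵥ v) := by
    rw [dotProduct_mulVec, ← mulVec_transpose, ← conjTranspose_eq_transpose_of_trivial, hA.eq,
      hA.mulVec_eigenvectorBasis, smul_dotProduct, smul_eq_mul]
  have hbound (i : ι) : hA.eigenvalues i * (B i ⬝ᵥ v) ^ 2 ≤ c * (B i ⬝ᵥ v) ^ 2 := by
    rcases le_or_gt (hA.eigenvalues i) c with hle | hlt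
    · exact mul_le_mul_of_nonneg_right hle (sq_nonneg _)
    · rw [hv _ _ hlt (hA.mulVec_eigenvectorBasis i)]
      simp
  calc v ⬝ᵥ A *ᵥ v = ∑ i, hA.eigenvalues i * (B i ⬝ᵥ v) ^ 2 := by
        rw [hparseval]
        exact sum_congr rfl fun i _ => by rw [heig]; ring
    _ ≤ ∑ i, c * (B i ⬝ᵥ v) ^ 2 := sum_le_sum fun i _ => hbound i
    _ = c * (v ⬝ᵥ v) := by
        rw [hparseval, mul_sum]
        simp only [sq]

namespace SimpleGraph.IsRegularOfDegree

variable {V : Type*} [Fintype V] {G : SimpleGraph V} [DecidableRel G.Adj] {d : ℕ}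

theorem adjMatrix_mulVec_one (hreg : G.IsRegularOfDegree d) :
    G.adjMatrix ℝ *ᵥ 1 = (d : ℝ) • 1 :=
  funext fun _ => by simpa using adjMatrix_mulVec_const_apply_of_regular (a := (1 : ℝ)) hreg

theorem one_dotProduct_adjMatrix_mulVec (hreg : G.IsRegularOfDegree d) (u : V → ℝ) :
    1 ⬝ᵥ G.adjMatrix ℝ *ᵥ u = d * ∑ i, u i := by
  rw [dotProduct_mulVec, ← mulVec_transpose, transpose_adjMatrix, hreg.adjMatrix_mulVec_one,
    smul_dotProduct, one_dotProduct, smul_eq_mul]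

theorem dotProduct_adjMatrix_mulVec_self (hreg : G.IsRegularOfDegree d) (x : V → ℝ) :
    x ⬝ᵥ G.adjMatrix ℝ *ᵥ x =
      d * (x ⬝ᵥ x) - (∑ i, ∑ j, if G.Adj i j then (x i - x j) ^ 2 else 0) / 2 := by
  classical
  rw [← G.lapMatrix_toLinearMap₂' ℝ x, toLinearMap₂'_apply', lapMatrix, sub_mulVec,
    dotProduct_sub, dotProduct_mulVec_degMatrix]
  simp only [hreg _, mul_assoc, ← mul_sum, dotProduct]
  ring

section SecondEigenvalue

variable {lam : ℝ}
  (hlam : ∀ (μ : ℝ) (v : V → ℝ), v ≠ 0 → ∑ i, v i = 0 → G.adjMatrix ℝ *ᵥ v = μ • v → μ ≤ lam)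
include hlam

theorem exists_eq_smul_one_of_mulVec_eq (hreg : G.IsRegularOfDegree d) (hd : lam < d)
    {μ : ℝ} (hμ : lam < μ) {u : V → ℝ} (hu : G.adjMatrix ℝ *ᵥ u = μ • u) :
    ∃ a : ℝ, u = a • 1 := by
  by_cases hu0 : u = 0
  · exact ⟨0, by simp [hu0]⟩
  set σ := ∑ i, u i
  have hσ : σ ≠ 0 := fun h => hμ.not_ge (hlam μ u hu0 h hu)
  have hμd : μ = d := by
    refine mul_right_cancel₀ hσ ?_
    rw [← hreg.one_dotProduct_adjMatrix_mulVec, hu, dotProduct_smul, one_dotProduct, smul_eq_mul]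
  have hV : (Fintype.card V : ℝ) ≠ 0 := by
    obtain ⟨i, -⟩ := Function.ne_iff.mp hu0
    exact Nat.cast_ne_zero.mpr (Fintype.card_pos_iff.mpr ⟨i⟩).ne'
  set z : V → ℝ := (Fintype.card V : ℝ) • u - σ • 1
  have hz_sum : ∑ i, z i = 0 := by
    simp [z, sum_sub_distrib, σ, mul_sum]
  have hz_eig : G.adjMatrix ℝ *ᵥ z = (d : ℝ) • z := by
    rw [mulVec_sub, mulVec_smul, mulVec_smul, hu, hreg.adjMatrix_mulVec_one, hμd, smul_sub,
      smul_comm (d : ℝ) σ, smul_comm (d : ℝ) (Fintype.card V : ℝ)]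
  have hz : z = 0 := by
    by_contra hz
    exact hd.not_ge (hlam d z hz hz_sum hz_eig)
  refine ⟨σ / Fintype.card V, ?_⟩
  rw [div_eq_inv_mul, mul_smul, ← sub_eq_zero.mp hz, smul_smul, inv_mul_cancel₀ hV, one_smul]

theorem dotProduct_adjMatrix_mulVec_le_of_sum_eq_zero (hreg : G.IsRegularOfDegree d)
    (hd : lam < d) {v : V → ℝ} (hv : ∑ i, v i = 0) :
    v ⬝ᵥ G.adjMatrix ℝ *ᵥ v ≤ lam * (v ⬝ᵥ v) :=
  (G.isHermitian_adjMatrix ℝ).dotProduct_mulVec_self_le_of_orthogonal fun _ _ hμ hu => by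
    obtain ⟨a, rfl⟩ := hreg.exists_eq_smul_one_of_mulVec_eq hlam hd hμ hu
    rw [smul_dotProduct, one_dotProduct, hv, smul_zero]

end SecondEigenvalue

end SimpleGraph.IsRegularOfDegree

theorem cast_card_add_card_compl {n : ℕ} (S : Finset (Fin n)) : (#S : ℝ) + #Sᶜ = n := by
  exact_mod_cast (card_add_card_compl S).trans (Fintype.card_fin n)

section EdgeCount

variable {n : ℕ} (G : SimpleGraph (Fin n)) [DecidableRel G.Adj]

theorem eCount_comm (S T : Finset (Fin n)) : eCount G S T = eCount G T S :=
  card_nbij' Prod.swap Prod.swap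
    (fun _ _ => by simp_all [G.adj_comm]) (fun _ _ => by simp_all [G.adj_comm])
    (fun _ _ => rfl) (fun _ _ => rfl)

theorem eCount_eq_sum (S T : Finset (Fin n)) :
    (eCount G S T : ℝ) = ∑ i, ∑ j, if i ∈ S ∧ j ∈ T ∧ G.Adj i j then 1 else 0 := by
  rw [eCount, card_filter, sum_product, Nat.cast_sum]
  simp [ite_and]

theorem sum_adj_sq_sub_ite_mem (S : Finset (Fin n)) (a b : ℝ) :
    (∑ i, ∑ j, if G.Adj i j then
        ((if i ∈ S then a else b) - (if j ∈ S then a else b)) ^ 2 else 0) =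
      2 * (a - b) ^ 2 * eCount G S Sᶜ := by
  have hterm (i j : Fin n) :
      (if G.Adj i j then ((if i ∈ S then a else b) - (if j ∈ S then a else b)) ^ 2 else 0) =
        (a - b) ^ 2 * ((if i ∈ S ∧ j ∈ Sᶜ ∧ G.Adj i j then 1 else 0) +
          (if i ∈ Sᶜ ∧ j ∈ S ∧ G.Adj i j then 1 else 0)) := by
    by_cases hi : i ∈ S <;> by_cases hj : j ∈ S <;> by_cases hij : G.Adj i j <;>
      simp [hi, hj, hij, sub_sq_comm b a]
  simp_rw [hterm, ← mul_sum, sum_add_distrib, ← eCount_eq_sum, eCount_comm G Sᶜ S]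
  ring

end EdgeCount

theorem sub_mul_card_mul_card_compl_le_eCount {n d : ℕ} {G : SimpleGraph (Fin n)}
    [DecidableRel G.Adj] (hreg : G.IsRegularOfDegree d) {lam : ℝ}
    (hlam : IsSecondLargestEig (G.adjMatrix ℝ) lam) (S : Finset (Fin n)) :
    ((d : ℝ) - lam) * #S * #Sᶜ ≤ n * eCount G S Sᶜ := by
  rcases le_or_gt (d : ℝ) lam with hle | hlt
  · have : ((d : ℝ) - lam) * #S * #Sᶜ ≤ 0 :=
      mul_nonpos_of_nonpos_of_nonneg
        (mul_nonpos_of_nonpos_of_nonneg (sub_nonpos.mpr hle) (by positivity)) (by positivity)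
    exact this.trans (by positivity)
  have hst := cast_card_add_card_compl S
  set s : ℝ := ↑(#S) with hs
  set t : ℝ := ↑(#Sᶜ) with ht
  set v : Fin n → ℝ := fun i => if i ∈ S then t else -s
  have hv_sum : ∑ i, v i = 0 := by
    simp [v, sum_ite, ← compl_filter, ← hs, ← ht]
    ring
  have hv_sq : v ⬝ᵥ v = s * t * n := by
    simp only [dotProduct, ← sq]
    simp [v, sum_ite, ← compl_filter, ← hs, ← ht, ← hst]
    ring
  have hray := hreg.dotProduct_adjMatrix_mulVec_le_of_sum_eq_zero hlam.2 hlt hv_sum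
  rw [hreg.dotProduct_adjMatrix_mulVec_self, sum_adj_sq_sub_ite_mem, hv_sq, sub_neg_eq_add,
    add_comm t, hst] at hray
  rcases (Nat.cast_nonneg (α := ℝ) n).eq_or_lt with hn | hn
  · have hs0 : s = 0 := by linarith [show (0 : ℝ) ≤ s by positivity, show (0 : ℝ) ≤ t by positivity]
    simp [hs0, ← hn]
  · refine le_of_mul_le_mul_right ?_ hn
    nlinarith

theorem stmt3_general (n d : ℕ) (G : SimpleGraph (Fin n)) [DecidableRel G.Adj]
    (hreg : G.IsRegularOfDegree d)
    (lam2 : ℝ) (hlam2 : IsSecondLargestEig (G.adjMatrix ℝ) lam2) :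
    ∀ S : Finset (Fin n), S.Nonempty → (S.card : ℝ) ≤ n / 2 →
      ((d : ℝ) - lam2) / 2 ≤ (eCount G S Sᶜ : ℝ) / S.card := by
  intro S hS hhalf
  have hs : (0 : ℝ) < #S := by exact_mod_cast hS.card_pos
  have hst := cast_card_add_card_compl S
  have hcut := sub_mul_card_mul_card_compl_le_eCount hreg hlam2 S
  rw [div_le_div_iff₀ two_pos hs]
  rcases le_or_gt (d : ℝ) lam2 with hle | hlt
  · nlinarith
  · nlinarith [mul_pos (sub_pos.mpr hlt) hs]

/-- for a connected `d`-regular finite simple graph `G` with second largest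
adjacency eigenvalue `λ₂`, the expansion ratio satisfies `h(G) ≥ (d - λ₂)/2`, i.e. every
nonempty vertex set `S` with `|S| ≤ n/2` satisfies `|∂S|/|S| ≥ (d - λ₂)/2`. -/
theorem stmt3 (n d : ℕ) (G : SimpleGraph (Fin n)) [DecidableRel G.Adj]
    (hconn : G.Connected) (hreg : G.IsRegularOfDegree d)
    (lam2 : ℝ) (hlam2 : IsSecondLargestEig (G.adjMatrix ℝ) lam2) :
    ∀ S : Finset (Fin n), S.Nonempty → (S.card : ℝ) ≤ n / 2 →
      ((d : ℝ) - lam2) / 2 ≤ (eCount G S Sᶜ : ℝ) / S.card :=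
  stmt3_general n d G hreg lam2 hlam2
end

section
/- Let G be a connected d-regular finite simple graph with adjacency matrix A and second largest eigenvalue λ_2. Then h(G) ≤ sqrt(2d(d - λ_2)). -/
open Finset Matrix

lemma eq_posPart_sub_add_ite {a m : ℝ} (hm : 0 ≤ m) (ha : 0 ≤ a) (hma : 0 < a → m ≤ a) :
    a = (a - m)⁺ + if 0 < a then m else 0 := by
  rcases ha.eq_or_lt with rfl | ha
  · simp [hm]
  · simp [ha, hma ha]

lemma posPart_sub_eq_posPart_sub_posPart_sub_add_ite {a b m : ℝ} (hm : 0 ≤ m)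
    (ha : 0 ≤ a) (hb : 0 ≤ b) (hma : 0 < a → m ≤ a) (hmb : 0 < b → m ≤ b) :
    (a - b)⁺ = ((a - m)⁺ - (b - m)⁺)⁺ + if 0 < a ∧ ¬ 0 < b then m else 0 := by
  rcases ha.eq_or_lt with rfl | ha <;> rcases hb.eq_or_lt with rfl | hb
  · simp [hm]
  · simp [hm, hb.le, hmb hb]
  · simp [hm, ha, ha.le, hma ha]
  · simp [ha, hb, hma ha, hmb hb]

section Superlevel

variable {V : Type*} [Fintype V]

noncomputable def superlevel (g : V → ℝ) (t : ℝ) : Finset V := univ.filter fun x => t < g x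

lemma superlevel_posPart_sub (g : V → ℝ) (m : ℝ) {t : ℝ} (ht : 0 ≤ t) :
    superlevel (fun x => (g x - m)⁺) t = superlevel g (t + m) := by
  ext x
  simp only [superlevel, mem_filter, mem_univ, true_and, posPart_def, lt_sup_iff]
  constructor
  · rintro (hx | hx) <;> linarith
  · intro hx
    left
    linarith

lemma sum_eq_sum_posPart_sub_add_mul_card (g : V → ℝ) (hg : ∀ x, 0 ≤ g x) {m : ℝ} (hm : 0 ≤ m)
    (hmg : ∀ x, 0 < g x → m ≤ g x) :
    ∑ x, g x = ∑ x, (g x - m)⁺ + m * #(superlevel g 0) := by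
  rw [sum_congr rfl fun x _ => eq_posPart_sub_add_ite hm (hg x) (hmg x), sum_add_distrib,
    sum_ite, sum_const_zero, sum_const, nsmul_eq_mul, mul_comm]
  simp [superlevel]

end Superlevel

theorem Matrix.mul_sum_sq_posPart_le_dotProduct_mulVec {ι : Type*} [Fintype ι]
    {A : Matrix ι ι ℝ} (hA : ∀ i j, 0 ≤ A i j) {μ : ℝ} {v : ι → ℝ} (hv : A *ᵥ v = μ • v) :
    μ * ∑ i, v⁺ i ^ 2 ≤ v⁺ ⬝ᵥ A *ᵥ v⁺ := by
  rw [mul_sum, dotProduct]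
  refine sum_le_sum fun i _ => ?_
  rcases le_or_gt (v i) 0 with hi | hi
  · simp [posPart_eq_zero.2 hi]
  · have hmono : (A *ᵥ v) i ≤ (A *ᵥ v⁺) i :=
      sum_le_sum fun j _ => mul_le_mul_of_nonneg_left (le_posPart _) (hA i j)
    rw [Pi.posPart_apply, posPart_eq_self.2 hi.le]
    calc μ * v i ^ 2 = v i * (A *ᵥ v) i := by simp [hv]; ring
      _ ≤ v i * (A *ᵥ v⁺) i := mul_le_mul_of_nonneg_left hmono hi.le

theorem Matrix.exists_mulVec_eq_smul_two_mul_card_pos_le {ι : Type*} [Fintype ι]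
    {A : Matrix ι ι ℝ} {μ : ℝ} {v : ι → ℝ} (hv0 : v ≠ 0) (hsum : ∑ i, v i = 0)
    (hv : A *ᵥ v = μ • v) :
    ∃ w : ι → ℝ, A *ᵥ w = μ • w ∧ (∃ i, 0 < w i) ∧ 2 * #{i | 0 < w i} ≤ Fintype.card ι := by
  classical
  have hpos (u : ι → ℝ) (hu0 : u ≠ 0) (hus : ∑ i, u i = 0) : ∃ i, 0 < u i := by
    obtain ⟨i, -, hi⟩ := exists_pos_of_sum_zero_of_exists_nonzero u hus
      (by simpa [funext_iff] using hu0)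
    exact ⟨i, hi⟩
  have hcard : #{i | 0 < v i} + #{i | 0 < (-v) i} ≤ Fintype.card ι := by
    rw [← card_union_of_disjoint (disjoint_filter.2 fun i _ h1 h2 => by simp at h2; linarith)]
    exact card_le_univ _
  by_cases h : 2 * #{i | 0 < v i} ≤ Fintype.card ι
  · exact ⟨v, hv, hpos v hv0 hsum, h⟩
  · exact ⟨-v, by rw [mulVec_neg, hv, smul_neg], hpos (-v) (neg_ne_zero.2 hv0) (by simp [hsum]),
      by omega⟩

namespace SimpleGraph

variable {V : Type*} [Fintype V] (G : SimpleGraph V) [DecidableRel G.Adj]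

def adjPairs : Finset (V × V) := univ.filter fun p => G.Adj p.1 p.2

def edgeBoundary [DecidableEq V] (S : Finset V) : Finset (V × V) :=
  G.adjPairs.filter fun p => p.1 ∈ S ∧ p.2 ∉ S

lemma sum_adjPairs_swap {M : Type*} [AddCommMonoid M] (f : V → V → M) :
    ∑ p ∈ G.adjPairs, f p.1 p.2 = ∑ p ∈ G.adjPairs, f p.2 p.1 :=
  sum_nbij' Prod.swap Prod.swap (by simp [adjPairs, G.adj_comm]) (by simp [adjPairs, G.adj_comm])
    (by simp) (by simp) (by simp)

lemma sum_adjPairs_eq_sum_neighborFinset {M : Type*} [AddCommMonoid M] (f : V → V → M) :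
    ∑ p ∈ G.adjPairs, f p.1 p.2 = ∑ i, ∑ j ∈ G.neighborFinset i, f i j := by
  rw [adjPairs, ← univ_product_univ, sum_filter, sum_product]
  simp [neighborFinset_eq_filter, sum_filter]

variable {G} in
lemma IsRegularOfDegree.sum_adjPairs_fst {d : ℕ} (hreg : G.IsRegularOfDegree d) (f : V → ℝ) :
    ∑ p ∈ G.adjPairs, f p.1 = d * ∑ i, f i := by
  rw [G.sum_adjPairs_eq_sum_neighborFinset fun i _ => f i, mul_sum]
  simp [card_neighborFinset_eq_degree, hreg _]

variable {G} in
lemma IsRegularOfDegree.sum_adjPairs_snd {d : ℕ} (hreg : G.IsRegularOfDegree d) (f : V → ℝ) :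
    ∑ p ∈ G.adjPairs, f p.2 = d * ∑ i, f i := by
  rw [G.sum_adjPairs_swap fun _ j => f j, hreg.sum_adjPairs_fst]

lemma sum_adjPairs_mul (y : V → ℝ) :
    ∑ p ∈ G.adjPairs, y p.1 * y p.2 = y ⬝ᵥ G.adjMatrix ℝ *ᵥ y := by
  rw [G.sum_adjPairs_eq_sum_neighborFinset fun i j => y i * y j]
  simp [dotProduct, mul_sum]

lemma two_mul_sum_adjPairs_posPart (g : V → ℝ) :
    2 * ∑ p ∈ G.adjPairs, (g p.1 - g p.2)⁺ = ∑ p ∈ G.adjPairs, |g p.1 - g p.2| := by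
  rw [two_mul]
  nth_rewrite 2 [G.sum_adjPairs_swap fun i j => (g i - g j)⁺]
  rw [← sum_add_distrib]
  refine sum_congr rfl fun p _ => ?_
  rw [← neg_sub (g p.1), posPart_neg, posPart_add_negPart]

variable {G} in
theorem IsRegularOfDegree.sum_adjPairs_abs_sq_sub_sq_le {d : ℕ} (hreg : G.IsRegularOfDegree d)
    {μ : ℝ} (y : V → ℝ) (hy : μ * ∑ i, y i ^ 2 ≤ y ⬝ᵥ G.adjMatrix ℝ *ᵥ y) :
    ∑ p ∈ G.adjPairs, |y p.1 ^ 2 - y p.2 ^ 2| ≤ 2 * √(2 * d * (d - μ)) * ∑ i, y i ^ 2 := by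
  set E := ∑ i, y i ^ 2
  set Q := y ⬝ᵥ G.adjMatrix ℝ *ᵥ y
  have hsq (s : ℝ) (hs : s ^ 2 = 1) :
      ∑ p ∈ G.adjPairs, (y p.1 + s * y p.2) ^ 2 = 2 * (d * E + s * Q) := by
    have (p : V × V) :
        (y p.1 + s * y p.2) ^ 2 = y p.1 ^ 2 + y p.2 ^ 2 + 2 * s * (y p.1 * y p.2) := by
      linear_combination (y p.2) ^ 2 * hs
    simp only [this, sum_add_distrib, ← mul_sum, hreg.sum_adjPairs_fst fun i => y i ^ 2,
      hreg.sum_adjPairs_snd fun i => y i ^ 2, sum_adjPairs_mul]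
    ring
  have hminus : ∑ p ∈ G.adjPairs, (y p.1 - y p.2) ^ 2 = 2 * (d * E - Q) := by
    simpa [← sub_eq_add_neg] using hsq (-1) (by norm_num)
  have hplus : ∑ p ∈ G.adjPairs, (y p.1 + y p.2) ^ 2 = 2 * (d * E + Q) := by
    simpa using hsq 1 (by norm_num)
  have hQ : Q ≤ d * E := by
    have : 0 ≤ ∑ p ∈ G.adjPairs, (y p.1 - y p.2) ^ 2 := sum_nonneg fun _ _ => sq_nonneg _
    linarith
  calc ∑ p ∈ G.adjPairs, |y p.1 ^ 2 - y p.2 ^ 2|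
      = ∑ p ∈ G.adjPairs, |y p.1 - y p.2| * |y p.1 + y p.2| := by
        simp only [sq_sub_sq, abs_mul, mul_comm]
    _ ≤ √(∑ p ∈ G.adjPairs, (y p.1 - y p.2) ^ 2) * √(∑ p ∈ G.adjPairs, (y p.1 + y p.2) ^ 2) := by
        simpa only [sq_abs] using Real.sum_mul_le_sqrt_mul_sqrt G.adjPairs
          (fun p => |y p.1 - y p.2|) (fun p => |y p.1 + y p.2|)
    _ ≤ √(2 * (d - μ) * E) * √(4 * d * E) := by
        rw [hminus, hplus]
        gcongr √?_ * √?_ <;> linarith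
    _ = 2 * √(2 * d * (d - μ)) * E := by
        rw [← Real.sqrt_mul' _ (by positivity),
          show 2 * (d - μ) * E * (4 * d * E) = (2 * E) ^ 2 * (2 * d * (d - μ)) by ring,
          Real.sqrt_mul (by positivity), Real.sqrt_sq (by positivity)]
        ring

lemma sum_adjPairs_posPart_sub_eq [DecidableEq V] (g : V → ℝ) (hg : ∀ x, 0 ≤ g x) {m : ℝ}
    (hm : 0 ≤ m) (hmg : ∀ x, 0 < g x → m ≤ g x) :
    ∑ p ∈ G.adjPairs, (g p.1 - g p.2)⁺ = ∑ p ∈ G.adjPairs, ((g p.1 - m)⁺ - (g p.2 - m)⁺)⁺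
      + m * #(G.edgeBoundary (superlevel g 0)) := by
  rw [sum_congr rfl fun p _ => posPart_sub_eq_posPart_sub_posPart_sub_add_ite hm (hg p.1)
    (hg p.2) (hmg p.1) (hmg p.2), sum_add_distrib, sum_ite, sum_const_zero, sum_const,
    nsmul_eq_mul, mul_comm]
  simp [edgeBoundary, superlevel]

theorem exists_superlevel_card_edgeBoundary_le [DecidableEq V] (g : V → ℝ) (hg : ∀ x, 0 ≤ g x)
    (hpos : ∃ x, 0 < g x) {c : ℝ}
    (h : ∑ p ∈ G.adjPairs, (g p.1 - g p.2)⁺ ≤ c * ∑ x, g x) :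
    ∃ t, 0 ≤ t ∧ (superlevel g t).Nonempty ∧
      (#(G.edgeBoundary (superlevel g t)) : ℝ) ≤ c * #(superlevel g t) := by
  induction hk : #(superlevel g 0) using Nat.strong_induction_on generalizing g with
  | _ k ih =>
  set P := superlevel g 0
  have hP : P.Nonempty := by simpa [P, superlevel, Finset.Nonempty] using hpos
  by_cases hgood : (#(G.edgeBoundary P) : ℝ) ≤ c * #P
  · exact ⟨0, le_rfl, hP, hgood⟩
  rw [not_le] at hgood
  -- Strip the bottom layer of height `m = min_P g` off `g`: it carries `m * #P` of the mass but
  -- `m * #∂P > c * m * #P` of the variation, so what remains satisfies the hypothesis strictly.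
  obtain ⟨x₀, hx₀, hmin⟩ := P.exists_min_image g hP
  set m := g x₀
  have hm : 0 < m := by simpa [P, superlevel] using hx₀
  have hmg (x : V) (hx : 0 < g x) : m ≤ g x := hmin x (by simpa [P, superlevel] using hx)
  set g' : V → ℝ := fun x => (g x - m)⁺
  have h' : ∑ p ∈ G.adjPairs, (g' p.1 - g' p.2)⁺ < c * ∑ x, g' x := by
    have := mul_lt_mul_of_pos_left hgood hm
    rw [G.sum_adjPairs_posPart_sub_eq g hg hm.le hmg,
      sum_eq_sum_posPart_sub_add_mul_card g hg hm.le hmg, mul_add] at h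
    linarith
  have hpos' : ∃ x, 0 < g' x := by
    by_contra! h0
    have hg'0 : ∀ x, g' x = 0 := fun x => le_antisymm (h0 x) (posPart_nonneg _)
    simp [hg'0] at h'
  have hsub : superlevel g' 0 ⊂ P := by
    rw [superlevel_posPart_sub g m le_rfl, zero_add]
    refine (ssubset_iff_of_subset fun x hx => ?_).2 ⟨x₀, hx₀, by simp [superlevel, m]⟩
    simp only [P, superlevel, mem_filter, mem_univ, true_and] at hx ⊢
    linarith
  obtain ⟨t, ht, hne, hle⟩ := ih _ (hk ▸ card_lt_card hsub) g' (fun x => posPart_nonneg _)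
    hpos' h'.le rfl
  rw [superlevel_posPart_sub g m ht] at hne hle
  exact ⟨t + m, by positivity, hne, hle⟩

end SimpleGraph

lemma eCount_compl_eq_card_edgeBoundary {n : ℕ} (G : SimpleGraph (Fin n)) [DecidableRel G.Adj]
    (S : Finset (Fin n)) : eCount G S Sᶜ = #(G.edgeBoundary S) := by
  unfold eCount SimpleGraph.edgeBoundary SimpleGraph.adjPairs
  congr 1
  ext p
  simp only [mem_filter, mem_product, mem_compl, mem_univ, true_and]
  tauto

theorem stmt4_general (n d : ℕ) (G : SimpleGraph (Fin n)) [DecidableRel G.Adj]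
    (hreg : G.IsRegularOfDegree d)
    (lam2 : ℝ) (hlam2 : IsSecondLargestEig (G.adjMatrix ℝ) lam2) :
    ∃ S : Finset (Fin n), S.Nonempty ∧ (S.card : ℝ) ≤ n / 2 ∧
      (eCount G S Sᶜ : ℝ) / S.card ≤ Real.sqrt (2 * d * ((d : ℝ) - lam2)) := by
  obtain ⟨v₀, hv₀, hsum, hAv₀⟩ := hlam2.1
  obtain ⟨v, hAv, ⟨i, hvi⟩, hhalf⟩ := exists_mulVec_eq_smul_two_mul_card_pos_le hv₀ hsum hAv₀
  have hray := mul_sum_sq_posPart_le_dotProduct_mulVec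
    (fun i j => by rw [SimpleGraph.adjMatrix_apply]; split_ifs <;> norm_num) hAv
  have hvar : ∑ p ∈ G.adjPairs, (v⁺ p.1 ^ 2 - v⁺ p.2 ^ 2)⁺
      ≤ √(2 * d * (d - lam2)) * ∑ i, v⁺ i ^ 2 := by
    have := hreg.sum_adjPairs_abs_sq_sub_sq_le _ hray
    rw [← G.two_mul_sum_adjPairs_posPart fun x => v⁺ x ^ 2] at this
    linarith
  obtain ⟨t, ht, hne, hle⟩ := G.exists_superlevel_card_edgeBoundary_le (fun x => v⁺ x ^ 2)
    (fun _ => sq_nonneg _) ⟨i, pow_pos (posPart_pos hvi) 2⟩ hvar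
  have hsupp : superlevel (fun x => v⁺ x ^ 2) t ⊆ superlevel v 0 := fun x hx => by
    simp only [superlevel, mem_filter, mem_univ, true_and] at hx ⊢
    by_contra! hx'
    simp [posPart_eq_zero.2 hx'] at hx
    linarith
  refine ⟨_, hne, ?_, ?_⟩
  · have := (Nat.mul_le_mul_left 2 (card_le_card hsupp)).trans hhalf
    rw [le_div_iff₀ two_pos]
    exact_mod_cast (by simpa [mul_comm] using this)
  · rw [eCount_compl_eq_card_edgeBoundary, div_le_iff₀ (by exact_mod_cast hne.card_pos)]
    exact hle

/-- for a connected `d`-regular finite simple graph `G` with second largest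
adjacency eigenvalue `λ₂`, the expansion ratio satisfies `h(G) ≤ √(2d(d - λ₂))`, i.e. some
nonempty vertex set `S` with `|S| ≤ n/2` satisfies `|∂S|/|S| ≤ √(2d(d - λ₂))`. -/
theorem stmt4 (n d : ℕ) (G : SimpleGraph (Fin n)) [DecidableRel G.Adj]
    (hconn : G.Connected) (hreg : G.IsRegularOfDegree d)
    (lam2 : ℝ) (hlam2 : IsSecondLargestEig (G.adjMatrix ℝ) lam2) :
    ∃ S : Finset (Fin n), S.Nonempty ∧ (S.card : ℝ) ≤ n / 2 ∧
      (eCount G S Sᶜ : ℝ) / S.card ≤ Real.sqrt (2 * d * ((d : ℝ) - lam2)) :=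
  stmt4_general n d G hreg lam2 hlam2
end

section
/- (Expander Mixing Lemma) Let G be a d-regular graph on n vertices with adjacency eigenvalues d = λ_1 ≥ λ_2 ≥ ... ≥ λ_n, and set λ = max(|λ_2|, |λ_n|). Then for all vertex subsets S, T: | e(S,T) − (d/n)|S||T| | ≤ λ·sqrt(|S|·|T|). -/
/-- `lam = max(|λ₂|, |λₙ|)` for the symmetric matrix `A` of a `d`-regular graph: the largest
absolute value of an eigenvalue attained by an eigenvector orthogonal to the all-ones vector. -/
def IsSecondEigAbsMax {n : ℕ} (A : Matrix (Fin n) (Fin n) ℝ) (lam : ℝ) : Prop :=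
  (∃ (μ : ℝ) (v : Fin n → ℝ), v ≠ 0 ∧ (∑ i, v i) = 0 ∧ A.mulVec v = μ • v ∧ |μ| = lam) ∧
    ∀ (μ : ℝ) (v : Fin n → ℝ), v ≠ 0 → (∑ i, v i) = 0 → A.mulVec v = μ • v → |μ| ≤ lam

/-!
Write `χ_S, χ_T` for the indicator vectors, so that `e(S,T) = χ_S ⬝ A χ_T`. Since `A` is
`d`-regular, it maps the constant part `(|T|/n)·𝟙` of `χ_T` to `(d|T|/n)·𝟙`, which contributes
exactly `(d/n)|S||T|`; the remainder is `χ_S ⬝ A t` with `t` the centred part of `χ_T`. The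
orthogonal complement of `𝟙` is `A`-invariant, and the restriction of the symmetric operator `A`
to it has all eigenvalues of absolute value at most `λ`, so `‖A t‖ ≤ λ‖t‖`. Cauchy–Schwarz and
`‖t‖² ≤ ‖χ_T‖² = |T|` finish the proof.
-/

open Finset Matrix Module.End
open scoped InnerProductSpace

namespace LinearMap.IsSymmetric

variable {E : Type*} [NormedAddCommGroup E] [InnerProductSpace ℝ E] [FiniteDimensional ℝ E]
  {T : E →ₗ[ℝ] E} {lam : ℝ}

theorem norm_apply_le_of_forall_hasEigenvalue (hT : T.IsSymmetric) (hlam0 : 0 ≤ lam)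
    (hlam : ∀ μ, HasEigenvalue T μ → |μ| ≤ lam) (x : E) : ‖T x‖ ≤ lam * ‖x‖ := by
  let b := hT.eigenvectorBasis rfl
  have hsq : ‖T x‖ ^ 2 ≤ (lam * ‖x‖) ^ 2 := by
    rw [← b.repr.norm_map, ← b.repr.norm_map x, mul_pow, EuclideanSpace.norm_sq_eq,
      EuclideanSpace.norm_sq_eq, mul_sum]
    gcongr with i
    rw [hT.eigenvectorBasis_apply_self_apply, norm_mul, mul_pow, Real.norm_eq_abs, sq_abs]
    gcongr ?_ * _
    exact sq_le_sq.mpr ((hlam _ (hT.hasEigenvalue_eigenvalues rfl i)).trans (le_abs_self lam))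
  exact le_of_sq_le_sq hsq (by positivity)

theorem abs_inner_le_of_invariant (hT : T.IsSymmetric) (hlam0 : 0 ≤ lam) {W : Submodule ℝ E}
    (hW : ∀ w ∈ W, T w ∈ W) (hlam : ∀ (μ : ℝ), ∀ w ∈ W, w ≠ 0 → T w = μ • w → |μ| ≤ lam)
    (x : E) {y : E} (hy : y ∈ W) : |⟪x, T y⟫_ℝ| ≤ lam * ‖x‖ * ‖y‖ := by
  have hTy : ‖T y‖ ≤ lam * ‖y‖ := by
    refine (hT.restrict_invariant hW).norm_apply_le_of_forall_hasEigenvalue hlam0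
      (fun μ hμ => ?_) ⟨y, hy⟩
    obtain ⟨w, hw⟩ := hμ.exists_hasEigenvector
    exact hlam μ w w.2 (by simpa using hw.2) (congrArg Subtype.val hw.apply_eq_smul)
  calc |⟪x, T y⟫_ℝ| ≤ ‖x‖ * ‖T y‖ := abs_real_inner_le_norm _ _
    _ ≤ ‖x‖ * (lam * ‖y‖) := by gcongr
    _ = lam * ‖x‖ * ‖y‖ := by ring

end LinearMap.IsSymmetric

theorem Matrix.IsHermitian.abs_dotProduct_mulVec_le {V : Type*} [Fintype V] [DecidableEq V]
    {A : Matrix V V ℝ} (hA : A.IsHermitian) {lam : ℝ} (hlam0 : 0 ≤ lam)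
    (hA_sum : ∀ v : V → ℝ, ∑ i, v i = 0 → ∑ i, (A *ᵥ v) i = 0)
    (hlam : ∀ (μ : ℝ) (v : V → ℝ), v ≠ 0 → ∑ i, v i = 0 → A *ᵥ v = μ • v → |μ| ≤ lam)
    (s : V → ℝ) {t : V → ℝ} (ht : ∑ i, t i = 0) :
    |s ⬝ᵥ A *ᵥ t| ≤ lam * √(∑ i, s i ^ 2) * √(∑ i, t i ^ 2) := by
  let W : Submodule ℝ (EuclideanSpace ℝ V) := (ℝ ∙ WithLp.toLp 2 1)ᗮ
  have hmem : ∀ v, v ∈ W ↔ ∑ i, v i = 0 := fun v => by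
    simp [W, Submodule.mem_orthogonal_singleton_iff_inner_right,
      EuclideanSpace.inner_eq_star_dotProduct, dotProduct_one]
  have key := (isSymmetric_toEuclideanLin_iff.mpr hA).abs_inner_le_of_invariant hlam0 (W := W)
    (fun w hw => (hmem _).mpr (hA_sum _ ((hmem w).mp hw)))
    (fun μ w hw hw0 hAw => hlam μ w (by simpa using hw0) ((hmem w).mp hw) (congrArg WithLp.ofLp hAw))
    (WithLp.toLp 2 s) ((hmem (WithLp.toLp 2 t)).mpr ht)
  simpa [EuclideanSpace.norm_eq, EuclideanSpace.inner_eq_star_dotProduct, dotProduct_comm]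
    using key

section centered

variable {V : Type*} [Fintype V]

noncomputable def centered (x : V → ℝ) : V → ℝ := fun i => x i - (∑ j, x j) / Fintype.card V

theorem sum_centered (x : V → ℝ) : ∑ i, centered x i = 0 := by
  rcases isEmpty_or_nonempty V with hV | hV
  · simp
  simp [centered, sum_sub_distrib, mul_div_cancel₀, Fintype.card_ne_zero]

theorem sum_sq_centered_le (x : V → ℝ) : ∑ i, centered x i ^ 2 ≤ ∑ i, x i ^ 2 := by
  rcases isEmpty_or_nonempty V with hV | hV
  · simp
  have hn : (Fintype.card V : ℝ) ≠ 0 := by simp [Fintype.card_ne_zero]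
  have h : ∑ i, centered x i ^ 2 = ∑ i, x i ^ 2 - (∑ i, x i) ^ 2 / Fintype.card V := by
    simp only [centered, sub_sq, sum_add_distrib, sum_sub_distrib, ← sum_mul, ← mul_sum,
      sum_const, card_univ, nsmul_eq_mul]
    field_simp
    ring
  rw [h, sub_le_self_iff]
  positivity

end centered

namespace SimpleGraph

variable {V : Type*} [Fintype V] {G : SimpleGraph V} [DecidableRel G.Adj] {d : ℕ}

theorem sum_adjMatrix_mulVec_of_regular {α : Type*} [Semiring α]
    (hreg : G.IsRegularOfDegree d) (v : V → α) :
    ∑ i, (G.adjMatrix α *ᵥ v) i = d * ∑ i, v i := by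
  have h : (1 : V → α) ᵥ* G.adjMatrix α = fun _ => (d : α) := by
    ext j
    simp [hreg j]
  rw [← one_dotProduct, dotProduct_mulVec, h, mul_sum]
  rfl

theorem dotProduct_adjMatrix_mulVec_of_regular (hreg : G.IsRegularOfDegree d) (x y : V → ℝ) :
    x ⬝ᵥ G.adjMatrix ℝ *ᵥ y =
      x ⬝ᵥ G.adjMatrix ℝ *ᵥ centered y + d / Fintype.card V * (∑ i, x i) * ∑ i, y i := by
  have hy : y = centered y + Function.const V ((∑ i, y i) / Fintype.card V) := by
    ext
    simp [centered]
  conv_lhs => rw [hy]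
  rw [mulVec_add, dotProduct_add]
  congr 1
  simp only [dotProduct, adjMatrix_mulVec_const_apply_of_regular hreg, ← sum_mul]
  ring

end SimpleGraph

theorem eCount_eq_dotProduct {n : ℕ} (G : SimpleGraph (Fin n)) [DecidableRel G.Adj]
    (S T : Finset (Fin n)) :
    (eCount G S T : ℝ) =
      (fun i => if i ∈ S then 1 else 0) ⬝ᵥ G.adjMatrix ℝ *ᵥ fun i => if i ∈ T then 1 else 0 := by
  rw [eCount, card_filter, Nat.cast_sum, sum_product, G.dotProduct_mulVec_adjMatrix,
    ← sum_subset (subset_univ S) fun i _ hi => by simp [hi]]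
  refine sum_congr rfl fun i hi => ?_
  rw [← sum_subset (subset_univ T) fun j _ hj => by simp [hj]]
  exact sum_congr rfl fun j hj => by simp [hi, hj]

/-- Expander Mixing Lemma: for a `d`-regular graph `G` on `n` vertices with
`λ = max(|λ₂|, |λₙ|)` and any vertex subsets `S, T`,
`| e(S,T) − (d/n)|S||T| | ≤ λ·√(|S|·|T|)`. -/
theorem stmt5 (n d : ℕ) (G : SimpleGraph (Fin n)) [DecidableRel G.Adj]
    (hreg : G.IsRegularOfDegree d)
    (lam : ℝ) (hlam : IsSecondEigAbsMax (G.adjMatrix ℝ) lam)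
    (S T : Finset (Fin n)) :
    |(eCount G S T : ℝ) - (d : ℝ) / n * S.card * T.card| ≤
      lam * Real.sqrt ((S.card : ℝ) * T.card) := by
  obtain ⟨⟨μ, -, -, -, -, rfl⟩, hlam⟩ := hlam
  have hsum (U : Finset (Fin n)) : ∑ i, (if i ∈ U then 1 else 0 : ℝ) = U.card := by simp
  have hsq (U : Finset (Fin n)) : ∑ i, (if i ∈ U then 1 else 0 : ℝ) ^ 2 = U.card := by simp
  rw [eCount_eq_dotProduct, G.dotProduct_adjMatrix_mulVec_of_regular hreg, hsum, hsum,
    Fintype.card_fin, add_sub_cancel_right, Real.sqrt_mul (Nat.cast_nonneg _), ← mul_assoc]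
  refine ((G.isHermitian_adjMatrix ℝ).abs_dotProduct_mulVec_le (abs_nonneg μ)
    (fun v hv => by rw [G.sum_adjMatrix_mulVec_of_regular hreg, hv, mul_zero]) hlam _
    (sum_centered _)).trans ?_
  rw [hsq]
  gcongr
  exact (sum_sq_centered_le _).trans_eq (hsq T)
end
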